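/- Let V be a maximum edge-disjoint triangle packing of a finite simple graph G. There is no triangle t ∉ V that shares an edge with three members ψ₁, ψ₂, ψ₃ of V all of which are of type 3. In other words, there is no hollow triangle of type [3,3,3]. -/
import Mathlib


open Finset

/-- The edge set of a triangle `t` (a set of vertices): all unordered pairs of
distinct vertices of `t`. -/
def triEdges {V : Type*} [DecidableEq V] (t : Finset V) : Finset (Sym2 V) :=
  t.sym2.filter (fun e => ¬ e.IsDiag)

/-- `P` is a collection of pairwise edge-disjoint triangles of `G`. -/
def IsTrianglePacking {V : Type*} [DecidableEq V] (G : SimpleGraph V)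
    (P : Finset (Finset V)) : Prop :=
  (∀ t ∈ P, G.IsNClique 3 t) ∧
    ∀ t₁ ∈ P, ∀ t₂ ∈ P, t₁ ≠ t₂ → Disjoint (triEdges t₁) (triEdges t₂)

/-- The triangle packing number `ν(G)`: the maximum number of pairwise
edge-disjoint triangles in `G`. -/
noncomputable def packingNumber {V : Type*} [DecidableEq V] (G : SimpleGraph V) : ℕ :=
  sSup {n | ∃ P : Finset (Finset V), IsTrianglePacking G P ∧ P.card = n}

/-- `P` is a maximum edge-disjoint triangle packing of `G`. -/
def IsMaxTrianglePacking {V : Type*} [DecidableEq V] (G : SimpleGraph V)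
    (P : Finset (Finset V)) : Prop :=
  IsTrianglePacking G P ∧
    ∀ Q : Finset (Finset V), IsTrianglePacking G Q → Q.card ≤ P.card

/-- `t` is a triangle of `G`, not in the packing `P`, and `ψ` is the unique
member of `P` sharing an edge with `t`. -/
def SinglyAttached {V : Type*} [DecidableEq V] (G : SimpleGraph V)
    (P : Finset (Finset V)) (t ψ : Finset V) : Prop :=
  G.IsNClique 3 t ∧ t ∉ P ∧ ψ ∈ P ∧ (triEdges t ∩ triEdges ψ).Nonempty ∧
    ∀ ψ' ∈ P, (triEdges t ∩ triEdges ψ').Nonempty → ψ' = ψ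

/-- The base edges of a solution triangle `ψ ∈ P`: the edges of `ψ` that are
shared with some triangle singly-attached to `ψ`. -/
def baseEdges {V : Type*} [DecidableEq V] (G : SimpleGraph V)
    (P : Finset (Finset V)) (ψ : Finset V) : Set (Sym2 V) :=
  {e | e ∈ triEdges ψ ∧ ∃ t, SinglyAttached G P t ψ ∧ e ∈ triEdges t}

lemma mem_triEdges {V : Type*} [DecidableEq V] {A : Finset V} {a b : V} :
    s(a,b) ∈ triEdges A ↔ a ∈ A ∧ b ∈ A ∧ a ≠ b := by
  simp [triEdges, Finset.mem_sym2_iff]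
  tauto

lemma triEdges_mem_iff {V : Type*} [DecidableEq V] {A : Finset V} {e : Sym2 V} :
    e ∈ triEdges A ↔ ∃ a b, a ∈ A ∧ b ∈ A ∧ a ≠ b ∧ e = s(a,b) := by
  induction e using Sym2.ind with
  | _ x y =>
    rw [mem_triEdges]
    constructor
    · rintro ⟨hx, hy, hxy⟩; exact ⟨x, y, hx, hy, hxy, rfl⟩
    · rintro ⟨a, b, ha, hb, hab, he⟩
      rw [Sym2.eq_iff] at he
      rcases he with ⟨rfl, rfl⟩ | ⟨rfl, rfl⟩
      exacts [⟨ha, hb, hab⟩, ⟨hb, ha, hab.symm⟩]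

lemma third_vertex {V : Type*} [DecidableEq V] {A : Finset V} {a b : V}
    (hA : A.card = 3) (ha : a ∈ A) (hb : b ∈ A) (hab : a ≠ b) :
    ∃ c, c ≠ a ∧ c ≠ b ∧ A = {a, b, c} := by
  have hsub : ({a, b} : Finset V) ⊆ A := by
    intro z hz; simp at hz; rcases hz with rfl | rfl <;> assumption
  have hcard2 : ({a, b} : Finset V).card = 2 := by
    rw [Finset.card_insert_of_notMem (by simpa using hab), Finset.card_singleton]
  have h1 : (A \ {a, b}).card = 1 := by
    rw [Finset.card_sdiff_of_subset hsub, hA, hcard2]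
  obtain ⟨c, hc⟩ := Finset.card_eq_one.mp h1
  have hcA : c ∈ A \ ({a, b} : Finset V) := by rw [hc]; simp
  rw [Finset.mem_sdiff, Finset.mem_insert, Finset.mem_singleton] at hcA
  push_neg at hcA
  refine ⟨c, hcA.2.1, hcA.2.2, ?_⟩
  apply Finset.eq_of_subset_of_card_le ?_ ?_ |>.symm
  · intro z hz; simp at hz; rcases hz with rfl | rfl | rfl <;> [exact ha; exact hb; exact hcA.1]
  · rw [hA, Finset.card_insert_of_notMem (by simp [hab, Ne.symm hcA.2.1]),
      Finset.card_insert_of_notMem (by simp [Ne.symm hcA.2.2]), Finset.card_singleton]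

lemma disj_of_common {V : Type*} [DecidableEq V] {A B : Finset V}
    (h : ∀ p ∈ A, p ∈ B → ∀ q ∈ A, q ∈ B → p = q) :
    Disjoint (triEdges A) (triEdges B) := by
  rw [Finset.disjoint_left]
  intro e heA heB
  obtain ⟨p, q, hpA, hqA, hpq, rfl⟩ := triEdges_mem_iff.mp heA
  rw [mem_triEdges] at heB
  exact hpq (h p hpA heB.1 q hqA heB.2.1)

lemma triEdges_card {V : Type*} [DecidableEq V] {a b c : V}
    (hab : a ≠ b) (hac : a ≠ c) (hbc : b ≠ c) :
    (triEdges ({a, b, c} : Finset V)).card = 3 := by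
  have : triEdges ({a, b, c} : Finset V) = {s(a,b), s(a,c), s(b,c)} := by
    ext e
    rw [triEdges_mem_iff]
    constructor
    · rintro ⟨p, q, hp, hq, hpq, rfl⟩
      simp only [Finset.mem_insert, Finset.mem_singleton] at hp hq ⊢
      rcases hp with rfl | rfl | rfl <;> rcases hq with rfl | rfl | rfl <;>
        simp_all [Sym2.eq_iff]
    · intro he
      simp only [Finset.mem_insert, Finset.mem_singleton] at he
      rcases he with rfl | rfl | rfl
      · exact ⟨a, b, by simp, by simp, hab, rfl⟩
      · exact ⟨a, c, by simp, by simp, hac, rfl⟩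
      · exact ⟨b, c, by simp, by simp, hbc, rfl⟩
  rw [this]
  rw [Finset.card_insert_of_notMem (by simp [Sym2.eq_iff]; tauto),
    Finset.card_insert_of_notMem (by simp [Sym2.eq_iff]; tauto), Finset.card_singleton]

lemma base_full {V : Type*} [DecidableEq V] {G : SimpleGraph V} {P : Finset (Finset V)}
    {ψ : Finset V} (n : (baseEdges G P ψ).ncard = 3) (hc : (triEdges ψ).card = 3) :
    ∀ e ∈ triEdges ψ, ∃ c, SinglyAttached G P c ψ ∧ e ∈ triEdges c := by
  have hsub : baseEdges G P ψ ⊆ ↑(triEdges ψ) := fun e he => Finset.mem_coe.mpr he.1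
  have heq : baseEdges G P ψ = ↑(triEdges ψ) :=
    Set.eq_of_subset_of_ncard_le hsub (by rw [Set.ncard_coe_finset, hc, n]) (Finset.finite_toSet _)
  intro e he
  have h2 : e ∈ baseEdges G P ψ := by rw [heq]; exact Finset.mem_coe.mpr he
  exact h2.2

lemma notMem_triple {V : Type*} [DecidableEq V] {a b c d : V}
    (h1 : d ≠ a) (h2 : d ≠ b) (h3 : d ≠ c) : d ∉ ({a, b, c} : Finset V) := by
  simp [h1, h2, h3]

set_option maxHeartbeats 1600000 in
lemma main333 {V : Type*} [DecidableEq V] (G : SimpleGraph V) (P : Finset (Finset V))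
    (hP : IsMaxTrianglePacking G P)
    (t ψ₁ ψ₂ ψ₃ : Finset V) (x₁ x₂ x₃ : V)
    (ht : G.IsNClique 3 t) (htP : t ∉ P)
    (h1 : ψ₁ ∈ P) (h2 : ψ₂ ∈ P) (h3 : ψ₃ ∈ P)
    (h12 : ψ₁ ≠ ψ₂) (h13 : ψ₁ ≠ ψ₃) (h23 : ψ₂ ≠ ψ₃)
    (hteq : t = {x₁, x₂, x₃})
    (hx12 : x₁ ≠ x₂) (hx13 : x₁ ≠ x₃) (hx23 : x₂ ≠ x₃)
    (he1 : s(x₂,x₃) ∈ triEdges ψ₁)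
    (he2 : s(x₁,x₃) ∈ triEdges ψ₂)
    (he3 : s(x₁,x₂) ∈ triEdges ψ₃)
    (n1 : (baseEdges G P ψ₁).ncard = 3)
    (n2 : (baseEdges G P ψ₂).ncard = 3)
    (n3 : (baseEdges G P ψ₃).ncard = 3) : False := by
  have hclique := hP.1.1
  have hdisj := hP.1.2
  -- shapes of the ψ's
  obtain ⟨y₁, hy1x2, hy1x3, hψ1⟩ :=
    third_vertex (hclique ψ₁ h1).card_eq (mem_triEdges.mp he1).1 (mem_triEdges.mp he1).2.1 hx23
  obtain ⟨y₂, hy2x1, hy2x3, hψ2⟩ :=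
    third_vertex (hclique ψ₂ h2).card_eq (mem_triEdges.mp he2).1 (mem_triEdges.mp he2).2.1 hx13
  obtain ⟨y₃, hy3x1, hy3x2, hψ3⟩ :=
    third_vertex (hclique ψ₃ h3).card_eq (mem_triEdges.mp he3).1 (mem_triEdges.mp he3).2.1 hx12
  have m1 : x₂ ∈ ψ₁ ∧ x₃ ∈ ψ₁ ∧ y₁ ∈ ψ₁ := by rw [hψ1]; refine ⟨?_, ?_, ?_⟩ <;> simp
  have m2 : x₁ ∈ ψ₂ ∧ x₃ ∈ ψ₂ ∧ y₂ ∈ ψ₂ := by rw [hψ2]; refine ⟨?_, ?_, ?_⟩ <;> simp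
  have m3 : x₁ ∈ ψ₃ ∧ x₂ ∈ ψ₃ ∧ y₃ ∈ ψ₃ := by rw [hψ3]; refine ⟨?_, ?_, ?_⟩ <;> simp
  -- y ≠ opposite x
  have hy1x1 : y₁ ≠ x₁ := by
    rintro rfl
    apply htP
    have h : ψ₁ = t := by rw [hψ1, hteq]; ext z; simp; tauto
    rwa [← h]
  have hy2x2 : y₂ ≠ x₂ := by
    rintro rfl
    apply htP
    have h : ψ₂ = t := by rw [hψ2, hteq]; ext z; simp; tauto
    rwa [← h]
  have hy3x3 : y₃ ≠ x₃ := by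
    rintro rfl
    apply htP
    have h : ψ₃ = t := by rw [hψ3, hteq]
    rwa [← h]
  -- y's pairwise distinct
  have hy12 : y₁ ≠ y₂ := by
    intro h
    exact Finset.disjoint_left.mp (hdisj ψ₁ h1 ψ₂ h2 h12)
      (mem_triEdges.mpr ⟨m1.2.1, m1.2.2, Ne.symm hy1x3⟩)
      (mem_triEdges.mpr ⟨m2.2.1, by rw [h]; exact m2.2.2, Ne.symm hy1x3⟩)
  have hy13 : y₁ ≠ y₃ := by
    intro h
    exact Finset.disjoint_left.mp (hdisj ψ₁ h1 ψ₃ h3 h13)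
      (mem_triEdges.mpr ⟨m1.1, m1.2.2, Ne.symm hy1x2⟩)
      (mem_triEdges.mpr ⟨m3.2.1, by rw [h]; exact m3.2.2, Ne.symm hy1x2⟩)
  have hy23 : y₂ ≠ y₃ := by
    intro h
    exact Finset.disjoint_left.mp (hdisj ψ₂ h2 ψ₃ h3 h23)
      (mem_triEdges.mpr ⟨m2.1, m2.2.2, Ne.symm hy2x1⟩)
      (mem_triEdges.mpr ⟨m3.1, by rw [h]; exact m3.2.2, Ne.symm hy2x1⟩)
  -- attached triangles at the chosen base edges
  have tc1 : (triEdges ψ₁).card = 3 := by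
    rw [hψ1]; exact triEdges_card hx23 (Ne.symm hy1x2) (Ne.symm hy1x3)
  have tc2 : (triEdges ψ₂).card = 3 := by
    rw [hψ2]; exact triEdges_card hx13 (Ne.symm hy2x1) (Ne.symm hy2x3)
  have tc3 : (triEdges ψ₃).card = 3 := by
    rw [hψ3]; exact triEdges_card hx12 (Ne.symm hy3x1) (Ne.symm hy3x2)
  obtain ⟨c₁, sa₁, hc₁e⟩ := base_full n1 tc1 (s(x₂,y₁))
    (mem_triEdges.mpr ⟨m1.1, m1.2.2, Ne.symm hy1x2⟩)
  obtain ⟨c₂, sa₂, hc₂e⟩ := base_full n2 tc2 (s(x₃,y₂))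
    (mem_triEdges.mpr ⟨m2.2.1, m2.2.2, Ne.symm hy2x3⟩)
  obtain ⟨c₃, sa₃, hc₃e⟩ := base_full n3 tc3 (s(x₁,y₃))
    (mem_triEdges.mpr ⟨m3.1, m3.2.2, Ne.symm hy3x1⟩)
  obtain ⟨v₁, hv1x2, hv1y1, hc1⟩ :=
    third_vertex sa₁.1.card_eq (mem_triEdges.mp hc₁e).1 (mem_triEdges.mp hc₁e).2.1 (Ne.symm hy1x2)
  obtain ⟨v₂, hv2x3, hv2y2, hc2⟩ :=
    third_vertex sa₂.1.card_eq (mem_triEdges.mp hc₂e).1 (mem_triEdges.mp hc₂e).2.1 (Ne.symm hy2x3)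
  obtain ⟨v₃, hv3x1, hv3y3, hc3⟩ :=
    third_vertex sa₃.1.card_eq (mem_triEdges.mp hc₃e).1 (mem_triEdges.mp hc₃e).2.1 (Ne.symm hy3x1)
  have mc1 : x₂ ∈ c₁ ∧ y₁ ∈ c₁ ∧ v₁ ∈ c₁ := by rw [hc1]; refine ⟨?_, ?_, ?_⟩ <;> simp
  have mc2 : x₃ ∈ c₂ ∧ y₂ ∈ c₂ ∧ v₂ ∈ c₂ := by rw [hc2]; refine ⟨?_, ?_, ?_⟩ <;> simp
  have mc3 : x₁ ∈ c₃ ∧ y₃ ∈ c₃ ∧ v₃ ∈ c₃ := by rw [hc3]; refine ⟨?_, ?_, ?_⟩ <;> simp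
  have uniq₁ := sa₁.2.2.2.2
  have uniq₂ := sa₂.2.2.2.2
  have uniq₃ := sa₃.2.2.2.2
  -- apex disequalities
  have hv1x1 : v₁ ≠ x₁ := by
    intro h
    have hm : s(x₁,x₂) ∈ triEdges c₁ := mem_triEdges.mpr ⟨by rw [← h]; exact mc1.2.2, mc1.1, hx12⟩
    exact h13 (uniq₁ ψ₃ h3 ⟨s(x₁,x₂), Finset.mem_inter.mpr ⟨hm, he3⟩⟩).symm
  have hv1x3 : v₁ ≠ x₃ := by
    intro h
    apply sa₁.2.1
    have h2 : c₁ = ψ₁ := by rw [hc1, hψ1, h]; ext z; simp; tauto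
    rwa [h2]
  have hv1y3 : v₁ ≠ y₃ := by
    intro h
    have hm : s(x₂,y₃) ∈ triEdges c₁ := mem_triEdges.mpr ⟨mc1.1, by rw [← h]; exact mc1.2.2, Ne.symm hy3x2⟩
    have hm' : s(x₂,y₃) ∈ triEdges ψ₃ := mem_triEdges.mpr ⟨m3.2.1, m3.2.2, Ne.symm hy3x2⟩
    exact h13 (uniq₁ ψ₃ h3 ⟨s(x₂,y₃), Finset.mem_inter.mpr ⟨hm, hm'⟩⟩).symm
  have hv2x1 : v₂ ≠ x₁ := by
    intro h
    apply sa₂.2.1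
    have h2 : c₂ = ψ₂ := by rw [hc2, hψ2, h]; ext z; simp; tauto
    rwa [h2]
  have hv2x2 : v₂ ≠ x₂ := by
    intro h
    have hm : s(x₂,x₃) ∈ triEdges c₂ := mem_triEdges.mpr ⟨by rw [← h]; exact mc2.2.2, mc2.1, hx23⟩
    exact h12 (uniq₂ ψ₁ h1 ⟨s(x₂,x₃), Finset.mem_inter.mpr ⟨hm, he1⟩⟩)
  have hv2y1 : v₂ ≠ y₁ := by
    intro h
    have hm : s(x₃,y₁) ∈ triEdges c₂ := mem_triEdges.mpr ⟨mc2.1, by rw [← h]; exact mc2.2.2, Ne.symm hy1x3⟩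
    have hm' : s(x₃,y₁) ∈ triEdges ψ₁ := mem_triEdges.mpr ⟨m1.2.1, m1.2.2, Ne.symm hy1x3⟩
    exact h12 (uniq₂ ψ₁ h1 ⟨s(x₃,y₁), Finset.mem_inter.mpr ⟨hm, hm'⟩⟩)
  have hv3x2 : v₃ ≠ x₂ := by
    intro h
    apply sa₃.2.1
    have h2 : c₃ = ψ₃ := by rw [hc3, hψ3, h]; ext z; simp; tauto
    rwa [h2]
  have hv3x3 : v₃ ≠ x₃ := by
    intro h
    have hm : s(x₁,x₃) ∈ triEdges c₃ := mem_triEdges.mpr ⟨mc3.1, by rw [← h]; exact mc3.2.2, hx13⟩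
    exact h23 (uniq₃ ψ₂ h2 ⟨s(x₁,x₃), Finset.mem_inter.mpr ⟨hm, he2⟩⟩)
  have hv3y2 : v₃ ≠ y₂ := by
    intro h
    have hm : s(x₁,y₂) ∈ triEdges c₃ := mem_triEdges.mpr ⟨mc3.1, by rw [← h]; exact mc3.2.2, Ne.symm hy2x1⟩
    have hm' : s(x₁,y₂) ∈ triEdges ψ₂ := mem_triEdges.mpr ⟨m2.1, m2.2.2, Ne.symm hy2x1⟩
    exact h23 (uniq₃ ψ₂ h2 ⟨s(x₁,y₂), Finset.mem_inter.mpr ⟨hm, hm'⟩⟩)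
  -- symmetric orientations (for simp)
  have hx21 := Ne.symm hx12; have hx31 := Ne.symm hx13; have hx32 := Ne.symm hx23
  have hx1y1 := Ne.symm hy1x1; have hx2y1 := Ne.symm hy1x2; have hx3y1 := Ne.symm hy1x3
  have hx1y2 := Ne.symm hy2x1; have hx2y2 := Ne.symm hy2x2; have hx3y2 := Ne.symm hy2x3
  have hx1y3 := Ne.symm hy3x1; have hx2y3 := Ne.symm hy3x2; have hx3y3 := Ne.symm hy3x3
  have hy21 := Ne.symm hy12; have hy31 := Ne.symm hy13; have hy32 := Ne.symm hy23
  have hx1v1 := Ne.symm hv1x1; have hx2v1 := Ne.symm hv1x2; have hx3v1 := Ne.symm hv1x3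
  have hy1v1 := Ne.symm hv1y1; have hy3v1 := Ne.symm hv1y3
  have hx1v2 := Ne.symm hv2x1; have hx2v2 := Ne.symm hv2x2; have hx3v2 := Ne.symm hv2x3
  have hy1v2 := Ne.symm hv2y1; have hy2v2 := Ne.symm hv2y2
  have hx1v3 := Ne.symm hv3x1; have hx2v3 := Ne.symm hv3x2; have hx3v3 := Ne.symm hv3x3
  have hy2v3 := Ne.symm hv3y2; have hy3v3 := Ne.symm hv3y3
  -- non-membership facts
  have nx1c1 : x₁ ∉ c₁ := by rw [hc1]; exact notMem_triple hx12 hx1y1 hx1v1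
  have nx3c1 : x₃ ∉ c₁ := by rw [hc1]; exact notMem_triple hx32 hx3y1 hx3v1
  have nx1c2 : x₁ ∉ c₂ := by rw [hc2]; exact notMem_triple hx13 hx1y2 hx1v2
  have nx2c2 : x₂ ∉ c₂ := by rw [hc2]; exact notMem_triple hx23 hx2y2 hx2v2
  have nx2c3 : x₂ ∉ c₃ := by rw [hc3]; exact notMem_triple hx21 hx2y3 hx2v3
  have nx3c3 : x₃ ∉ c₃ := by rw [hc3]; exact notMem_triple hx31 hx3y3 hx3v3
  have ny1c2 : y₁ ∉ c₂ := by rw [hc2]; exact notMem_triple hy1x3 hy12 hy1v2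
  have ny2c3 : y₂ ∉ c₃ := by rw [hc3]; exact notMem_triple hy2x1 hy23 hy2v3
  -- pairwise edge-disjointness among the new triangles
  have Dtc1 : Disjoint (triEdges t) (triEdges c₁) := by
    apply disj_of_common
    have K : ∀ p ∈ t, p ∈ c₁ → p = x₂ := by
      intro p hp hpB
      rw [hteq] at hp; simp only [Finset.mem_insert, Finset.mem_singleton] at hp
      rcases hp with rfl | rfl | rfl
      · exact absurd hpB nx1c1
      · rfl
      · exact absurd hpB nx3c1
    intro p hp hpB q hq hqB
    rw [K p hp hpB, K q hq hqB]
  have Dtc2 : Disjoint (triEdges t) (triEdges c₂) := by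
    apply disj_of_common
    have K : ∀ p ∈ t, p ∈ c₂ → p = x₃ := by
      intro p hp hpB
      rw [hteq] at hp; simp only [Finset.mem_insert, Finset.mem_singleton] at hp
      rcases hp with rfl | rfl | rfl
      · exact absurd hpB nx1c2
      · exact absurd hpB nx2c2
      · rfl
    intro p hp hpB q hq hqB
    rw [K p hp hpB, K q hq hqB]
  have Dtc3 : Disjoint (triEdges t) (triEdges c₃) := by
    apply disj_of_common
    have K : ∀ p ∈ t, p ∈ c₃ → p = x₁ := by
      intro p hp hpB
      rw [hteq] at hp; simp only [Finset.mem_insert, Finset.mem_singleton] at hp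
      rcases hp with rfl | rfl | rfl
      · rfl
      · exact absurd hpB nx2c3
      · exact absurd hpB nx3c3
    intro p hp hpB q hq hqB
    rw [K p hp hpB, K q hq hqB]
  have Dc12 : Disjoint (triEdges c₁) (triEdges c₂) := by
    apply disj_of_common
    have K : ∀ p ∈ c₁, p ∈ c₂ → p = v₁ := by
      intro p hp hpB
      rw [hc1] at hp; simp only [Finset.mem_insert, Finset.mem_singleton] at hp
      rcases hp with rfl | rfl | rfl
      · exact absurd hpB nx2c2
      · exact absurd hpB ny1c2
      · rfl
    intro p hp hpB q hq hqB
    rw [K p hp hpB, K q hq hqB]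
  have Dc13 : Disjoint (triEdges c₁) (triEdges c₃) := by
    apply disj_of_common
    have K : ∀ p ∈ c₁, p ∈ c₃ → p = v₃ := by
      intro p hp hpB
      rw [hc1] at hp; simp only [Finset.mem_insert, Finset.mem_singleton] at hp
      rcases hp with rfl | rfl | rfl
      · exact absurd hpB nx2c3
      · rw [hc3] at hpB; simp only [Finset.mem_insert, Finset.mem_singleton] at hpB
        rcases hpB with h | h | h
        · exact absurd h hy1x1
        · exact absurd h hy13
        · exact h
      · rw [hc3] at hpB; simp only [Finset.mem_insert, Finset.mem_singleton] at hpB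
        rcases hpB with h | h | h
        · exact absurd h hv1x1
        · exact absurd h hv1y3
        · exact h
    intro p hp hpB q hq hqB
    rw [K p hp hpB, K q hq hqB]
  have Dc23 : Disjoint (triEdges c₂) (triEdges c₃) := by
    apply disj_of_common
    have K : ∀ p ∈ c₂, p ∈ c₃ → p = v₂ := by
      intro p hp hpB
      rw [hc2] at hp; simp only [Finset.mem_insert, Finset.mem_singleton] at hp
      rcases hp with rfl | rfl | rfl
      · exact absurd hpB nx3c3
      · exact absurd hpB ny2c3
      · rfl
    intro p hp hpB q hq hqB
    rw [K p hp hpB, K q hq hqB]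
  -- the new triangles vs the old remaining members
  have hc1old : ∀ ψ' ∈ P, ψ' ≠ ψ₁ → Disjoint (triEdges c₁) (triEdges ψ') := by
    intro ψ' hψ' hne
    by_contra h
    rw [Finset.not_disjoint_iff_nonempty_inter] at h
    exact hne (uniq₁ ψ' hψ' h)
  have hc2old : ∀ ψ' ∈ P, ψ' ≠ ψ₂ → Disjoint (triEdges c₂) (triEdges ψ') := by
    intro ψ' hψ' hne
    by_contra h
    rw [Finset.not_disjoint_iff_nonempty_inter] at h
    exact hne (uniq₂ ψ' hψ' h)
  have hc3old : ∀ ψ' ∈ P, ψ' ≠ ψ₃ → Disjoint (triEdges c₃) (triEdges ψ') := by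
    intro ψ' hψ' hne
    by_contra h
    rw [Finset.not_disjoint_iff_nonempty_inter] at h
    exact hne (uniq₃ ψ' hψ' h)
  have he1' : s(x₃,x₂) ∈ triEdges ψ₁ := mem_triEdges.mpr ⟨m1.2.1, m1.1, hx32⟩
  have he2' : s(x₃,x₁) ∈ triEdges ψ₂ := mem_triEdges.mpr ⟨m2.2.1, m2.1, hx31⟩
  have he3' : s(x₂,x₁) ∈ triEdges ψ₃ := mem_triEdges.mpr ⟨m3.2.1, m3.1, hx21⟩
  have htold : ∀ ψ' ∈ P, ψ' ≠ ψ₁ → ψ' ≠ ψ₂ → ψ' ≠ ψ₃ →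
      Disjoint (triEdges t) (triEdges ψ') := by
    intro ψ' hψ' hn1 hn2 hn3
    rw [Finset.disjoint_left]
    intro e het heψ
    obtain ⟨p, q, hp, hq, hpq, rfl⟩ := triEdges_mem_iff.mp het
    rw [hteq] at hp hq
    simp only [Finset.mem_insert, Finset.mem_singleton] at hp hq
    have key : ∀ ψi, ψi ∈ P → ψ' ≠ ψi → s(p,q) ∈ triEdges ψi → False := fun ψi hi hni hmem =>
      Finset.disjoint_left.mp (hdisj ψi hi ψ' hψ' (Ne.symm hni)) hmem heψ
    rcases hp with rfl | rfl | rfl <;> rcases hq with rfl | rfl | rfl <;>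
      first
      | exact hpq rfl
      | exact key ψ₁ h1 hn1 he1
      | exact key ψ₁ h1 hn1 he1'
      | exact key ψ₂ h2 hn2 he2
      | exact key ψ₂ h2 hn2 he2'
      | exact key ψ₃ h3 hn3 he3
      | exact key ψ₃ h3 hn3 he3'
  -- distinctness of the new triangles
  have ne_of_mem : ∀ {a : V} {A B : Finset V}, a ∈ A → a ∉ B → A ≠ B :=
    fun h h' e => h' (e ▸ h)
  have tx1 : x₁ ∈ t := by rw [hteq]; simp
  have tx2 : x₂ ∈ t := by rw [hteq]; simp
  have htc1 : t ≠ c₁ := ne_of_mem tx1 nx1c1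
  have htc2 : t ≠ c₂ := ne_of_mem tx2 nx2c2
  have htc3 : t ≠ c₃ := ne_of_mem tx2 nx2c3
  have hc1c2 : c₁ ≠ c₂ := ne_of_mem mc1.2.1 ny1c2
  have hc1c3 : c₁ ≠ c₃ := ne_of_mem mc1.1 nx2c3
  have hc2c3 : c₂ ≠ c₃ := ne_of_mem mc2.2.1 ny2c3
  -- build the bigger packing
  set R : Finset (Finset V) := P \ {ψ₁, ψ₂, ψ₃} with hR
  have htR : t ∉ R := fun h => htP (Finset.mem_sdiff.mp h).1
  have hc1R : c₁ ∉ R := fun h => sa₁.2.1 (Finset.mem_sdiff.mp h).1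
  have hc2R : c₂ ∉ R := fun h => sa₂.2.1 (Finset.mem_sdiff.mp h).1
  have hc3R : c₃ ∉ R := fun h => sa₃.2.1 (Finset.mem_sdiff.mp h).1
  set Q : Finset (Finset V) := insert t (insert c₁ (insert c₂ (insert c₃ R))) with hQ
  have hQmem : ∀ A, A ∈ Q ↔ A = t ∨ A = c₁ ∨ A = c₂ ∨ A = c₃ ∨ A ∈ R := by
    intro A; simp [hQ, Finset.mem_insert]
  have hQpack : IsTrianglePacking G Q := by
    constructor
    · intro A hA
      rcases (hQmem A).mp hA with rfl | rfl | rfl | rfl | hA'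
      · exact ht
      · exact sa₁.1
      · exact sa₂.1
      · exact sa₃.1
      · exact hclique A (Finset.mem_sdiff.mp hA').1
    · intro A hA B hB hAB
      rcases (hQmem A).mp hA with rfl | rfl | rfl | rfl | hA' <;>
        rcases (hQmem B).mp hB with rfl | rfl | rfl | rfl | hB' <;>
        first
        | exact absurd rfl hAB
        | exact Dtc1 | exact Dtc2 | exact Dtc3 | exact Dc12 | exact Dc13 | exact Dc23
        | exact Dtc1.symm | exact Dtc2.symm | exact Dtc3.symm
        | exact Dc12.symm | exact Dc13.symm | exact Dc23.symm
        | exact hdisj _ (Finset.mem_sdiff.mp hA').1 _ (Finset.mem_sdiff.mp hB').1 hAB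
        | (obtain ⟨hBP, hBne⟩ := Finset.mem_sdiff.mp hB'
           simp only [Finset.mem_insert, Finset.mem_singleton, not_or] at hBne
           first
           | exact htold _ hBP hBne.1 hBne.2.1 hBne.2.2
           | exact hc1old _ hBP hBne.1
           | exact hc2old _ hBP hBne.2.1
           | exact hc3old _ hBP hBne.2.2)
        | (obtain ⟨hAP, hAne⟩ := Finset.mem_sdiff.mp hA'
           simp only [Finset.mem_insert, Finset.mem_singleton, not_or] at hAne
           first
           | exact (htold _ hAP hAne.1 hAne.2.1 hAne.2.2).symm
           | exact (hc1old _ hAP hAne.1).symm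
           | exact (hc2old _ hAP hAne.2.1).symm
           | exact (hc3old _ hAP hAne.2.2).symm)
  -- cardinality count
  have hsub3 : ({ψ₁, ψ₂, ψ₃} : Finset (Finset V)) ⊆ P := by
    intro z hz; simp at hz; rcases hz with rfl | rfl | rfl <;> assumption
  have hcard3 : ({ψ₁, ψ₂, ψ₃} : Finset (Finset V)).card = 3 := by
    rw [Finset.card_insert_of_notMem (by simp [h12, h13]),
      Finset.card_insert_of_notMem (by simp [h23]), Finset.card_singleton]
  have hP3 : 3 ≤ P.card := hcard3 ▸ Finset.card_le_card hsub3
  have hRcard : R.card = P.card - 3 := by rw [hR, Finset.card_sdiff_of_subset hsub3, hcard3]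
  have hQcard : Q.card = P.card + 1 := by
    rw [hQ, Finset.card_insert_of_notMem (by
        simp only [Finset.mem_insert]
        push_neg
        exact ⟨htc1, htc2, htc3, htR⟩),
      Finset.card_insert_of_notMem (by
        simp only [Finset.mem_insert]
        push_neg
        exact ⟨hc1c2, hc1c3, hc1R⟩),
      Finset.card_insert_of_notMem (by
        simp only [Finset.mem_insert]
        push_neg
        exact ⟨hc2c3, hc2R⟩),
      Finset.card_insert_of_notMem hc3R, hRcard]
    omega
  have := hP.2 Q hQpack
  omega

lemma tri_swap {V : Type*} [DecidableEq V] {A : Finset V} {a b : V}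
    (h : s(a,b) ∈ triEdges A) : s(b,a) ∈ triEdges A := by
  rw [Sym2.eq_swap]; exact h


set_option maxHeartbeats 1600000 in
/-- There is no hollow triangle of type `[3,3,3]`. -/
theorem no_hollow_333 {V : Type*} [Fintype V] [DecidableEq V]
    (G : SimpleGraph V) (P : Finset (Finset V))
    (hP : IsMaxTrianglePacking G P) :
    ¬ ∃ (t ψ₁ ψ₂ ψ₃ : Finset V), G.IsNClique 3 t ∧ t ∉ P ∧
      ψ₁ ∈ P ∧ ψ₂ ∈ P ∧ ψ₃ ∈ P ∧ ψ₁ ≠ ψ₂ ∧ ψ₁ ≠ ψ₃ ∧ ψ₂ ≠ ψ₃ ∧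
      (triEdges t ∩ triEdges ψ₁).Nonempty ∧
      (triEdges t ∩ triEdges ψ₂).Nonempty ∧
      (triEdges t ∩ triEdges ψ₃).Nonempty ∧
      (baseEdges G P ψ₁).ncard = 3 ∧ (baseEdges G P ψ₂).ncard = 3 ∧
      (baseEdges G P ψ₃).ncard = 3 := by
  rintro ⟨t, ψ₁, ψ₂, ψ₃, ht, htP, h1, h2, h3, h12, h13, h23, hn1, hn2, hn3, n1, n2, n3⟩
  obtain ⟨a, b, c, hab, hac, hbc, hteq⟩ := Finset.card_eq_three.mp ht.card_eq
  obtain ⟨g₁, hg₁⟩ := hn1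
  obtain ⟨g₂, hg₂⟩ := hn2
  obtain ⟨g₃, hg₃⟩ := hn3
  rw [Finset.mem_inter] at hg₁ hg₂ hg₃
  have hdisj := hP.1.2
  have hopt : ∀ g ∈ triEdges t, g = s(a,b) ∨ g = s(a,c) ∨ g = s(b,c) := by
    intro g hg
    obtain ⟨p, q, hp, hq, hpq, rfl⟩ := triEdges_mem_iff.mp hg
    rw [hteq] at hp hq
    simp only [Finset.mem_insert, Finset.mem_singleton] at hp hq
    rcases hp with rfl | rfl | rfl <;> rcases hq with rfl | rfl | rfl <;>
      first
      | exact absurd rfl hpq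
      | exact Or.inl rfl
      | exact Or.inl Sym2.eq_swap
      | exact Or.inr (Or.inl rfl)
      | exact Or.inr (Or.inl Sym2.eq_swap)
      | exact Or.inr (Or.inr rfl)
      | exact Or.inr (Or.inr Sym2.eq_swap)
  have hne12 : g₁ ≠ g₂ := by
    rintro rfl; exact Finset.disjoint_left.mp (hdisj ψ₁ h1 ψ₂ h2 h12) hg₁.2 hg₂.2
  have hne13 : g₁ ≠ g₃ := by
    rintro rfl; exact Finset.disjoint_left.mp (hdisj ψ₁ h1 ψ₃ h3 h13) hg₁.2 hg₃.2
  have hne23 : g₂ ≠ g₃ := by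
    rintro rfl; exact Finset.disjoint_left.mp (hdisj ψ₂ h2 ψ₃ h3 h23) hg₂.2 hg₃.2
  have hteq_acb : t = {a, c, b} := by rw [hteq]; ext z; simp; tauto
  have hteq_bac : t = {b, a, c} := by rw [hteq]; ext z; simp; tauto
  have hteq_bca : t = {b, c, a} := by rw [hteq]; ext z; simp; tauto
  have hteq_cab : t = {c, a, b} := by rw [hteq]; ext z; simp; tauto
  have hteq_cba : t = {c, b, a} := by rw [hteq]; ext z; simp; tauto
  rcases hopt g₁ hg₁.1 with e1 | e1 | e1 <;>
    rcases hopt g₂ hg₂.1 with e2 | e2 | e2 <;>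
    rcases hopt g₃ hg₃.1 with e3 | e3 | e3 <;>
    first
    | exact hne12 (e1.trans e2.symm)
    | exact hne13 (e1.trans e3.symm)
    | exact hne23 (e2.trans e3.symm)
    -- (e1,e2,e3) = (bc,ac,ab) : X = (a,b,c)
    | exact main333 G P hP t ψ₁ ψ₂ ψ₃ a b c ht htP h1 h2 h3 h12 h13 h23 hteq
        hab hac hbc (e1 ▸ hg₁.2) (e2 ▸ hg₂.2) (e3 ▸ hg₃.2) n1 n2 n3
    -- (bc,ab,ac) : X = (a,c,b)
    | exact main333 G P hP t ψ₁ ψ₂ ψ₃ a c b ht htP h1 h2 h3 h12 h13 h23 hteq_acb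
        hac hab (Ne.symm hbc) (tri_swap (e1 ▸ hg₁.2)) (e2 ▸ hg₂.2) (e3 ▸ hg₃.2) n1 n2 n3
    -- (ac,bc,ab) : X = (b,a,c)
    | exact main333 G P hP t ψ₁ ψ₂ ψ₃ b a c ht htP h1 h2 h3 h12 h13 h23 hteq_bac
        (Ne.symm hab) hbc hac (e1 ▸ hg₁.2) (e2 ▸ hg₂.2) (tri_swap (e3 ▸ hg₃.2)) n1 n2 n3
    -- (ac,ab,bc) : X = (b,c,a)
    | exact main333 G P hP t ψ₁ ψ₂ ψ₃ b c a ht htP h1 h2 h3 h12 h13 h23 hteq_bca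
        hbc (Ne.symm hab) (Ne.symm hac) (tri_swap (e1 ▸ hg₁.2)) (tri_swap (e2 ▸ hg₂.2))
        (e3 ▸ hg₃.2) n1 n2 n3
    -- (ab,bc,ac) : X = (c,a,b)
    | exact main333 G P hP t ψ₁ ψ₂ ψ₃ c a b ht htP h1 h2 h3 h12 h13 h23 hteq_cab
        (Ne.symm hac) (Ne.symm hbc) hab (e1 ▸ hg₁.2) (tri_swap (e2 ▸ hg₂.2))
        (tri_swap (e3 ▸ hg₃.2)) n1 n2 n3
    -- (ab,ac,bc) : X = (c,b,a)
    | exact main333 G P hP t ψ₁ ψ₂ ψ₃ c b a ht htP h1 h2 h3 h12 h13 h23 hteq_cba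
        (Ne.symm hbc) (Ne.symm hac) (Ne.symm hab) (tri_swap (e1 ▸ hg₁.2))
        (tri_swap (e2 ▸ hg₂.2)) (tri_swap (e3 ▸ hg₃.2)) n1 n2 n3
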